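/- The function v : ℝ → ℝ given by v(x) = (x/2)·(2Λ(θ_x) + Λ(θ_x + π/x) + Λ(θ_x − π/x) − Λ(2θ_x − π/2)) is strictly increasing on the interval [5, ∞). (In particular the sequence n ↦ v(n), which by Vesnin's formula equals the hyperbolic volume of the n-th Löbell polyhedron L(n), is strictly increasing for integers n ≥ 5.) -/

import Mathlib

/-- The Lobachevsky function `Λ(z) = -∫₀^z log |2 sin t| dt`. -/
noncomputable def lob (z : ℝ) : ℝ := -∫ t in (0:ℝ)..z, Real.log |2 * Real.sin t|

/-- `θ_x = π/2 - arccos (1 / (2 cos (π/x)))`. -/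
noncomputable def theta (x : ℝ) : ℝ :=
  Real.pi / 2 - Real.arccos (1 / (2 * Real.cos (Real.pi / x)))

/-- `g(x) = 2Λ(θ_x) + Λ(θ_x + π/x) + Λ(θ_x − π/x) − Λ(2θ_x − π/2)`. -/
noncomputable def lobG (x : ℝ) : ℝ :=
  2 * lob (theta x) + lob (theta x + Real.pi / x) + lob (theta x - Real.pi / x)
    - lob (2 * theta x - Real.pi / 2)

/-- `v(x) = (x/2) · g(x)`, the volume of the Löbell polyhedron `L(x)` for integer `x ≥ 5`. -/
noncomputable def lobV (x : ℝ) : ℝ := x / 2 * lobG x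

/-!
Write `α = π/x`, `θ = θ_x` and `L(t) = log |2 sin t|` (`logTwoSin`), so that `Λ' = -L` away
from the zeros of `sin`. Since `θ` is defined by `2 sin θ cos α = 1`, one has the product formula
`(2 sin θ)² · 2 sin (θ + α) · 2 sin (θ - α) = (2 sin (2θ - π/2))²`, i.e. `∂g/∂θ = 0`. Hence only
the explicit dependence on `α` survives: `v'(x) = g(x)/2 + (π/2x) (L(θ + α) - L(θ - α))`.
For `x > 4` all of `θ`, `θ ± α`, `π/2 - 2θ` lie in `(0, π/2)`, where `Λ > 0` (it is strictly
concave on `[0, π/2]` and vanishes at both ends), so `g > 0`; and `L` is increasing there, so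
`v' > 0`.
-/

open Real MeasureTheory intervalIntegral Set

noncomputable def logTwoSin (t : ℝ) : ℝ := log |2 * sin t|

lemma logTwoSin_neg (t : ℝ) : logTwoSin (-t) = logTwoSin t := by
  simp [logTwoSin]

lemma measurable_logTwoSin : Measurable logTwoSin := by
  unfold logTwoSin; fun_prop

lemma intervalIntegrable_logTwoSin (a b : ℝ) : IntervalIntegrable logTwoSin volume a b := by
  have hf : MeromorphicOn (fun t : ℝ => 2 * sin t) (uIcc a b) :=
    (analyticOnNhd_const.mul analyticOnNhd_sin).meromorphicOn
  exact hf.intervalIntegrable_log_norm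

lemma lob_neg (z : ℝ) : lob (-z) = -lob z := by
  have h := integral_comp_neg (a := 0) (b := z) logTwoSin
  simp only [logTwoSin_neg, neg_zero] at h
  rw [lob, lob, neg_inj]
  change ∫ t in (0 : ℝ)..-z, logTwoSin t = -∫ t in (0 : ℝ)..z, logTwoSin t
  rw [h, integral_symm]

lemma continuous_lob : Continuous lob :=
  (continuous_primitive (fun a b => intervalIntegrable_logTwoSin a b) 0).neg

lemma hasDerivAt_lob {z : ℝ} (hz : sin z ≠ 0) : HasDerivAt lob (-logTwoSin z) z := by
  have hcont : ContinuousAt logTwoSin z :=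
    (continuous_const.mul continuous_sin).abs.continuousAt.log (by simpa using hz)
  exact (integral_hasDerivAt_right (intervalIntegrable_logTwoSin 0 z)
    measurable_logTwoSin.aestronglyMeasurable.stronglyMeasurableAtFilter hcont).neg

lemma HasDerivAt.lob {f : ℝ → ℝ} {f' x : ℝ} (hf : HasDerivAt f f' x)
    (hx : Real.sin (f x) ≠ 0) :
    HasDerivAt (fun y => _root_.lob (f y)) (-logTwoSin (f x) * f') x :=
  (hasDerivAt_lob hx).comp x hf

lemma lob_zero : lob 0 = 0 := by
  simp [lob]

lemma lob_pi_div_two : lob (π / 2) = 0 := by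
  have h : ∫ t in (0 : ℝ)..π / 2, logTwoSin t
      = ∫ t in (0 : ℝ)..π / 2, (log 2 + log (sin t)) := by
    refine integral_congr_ae (Filter.Eventually.of_forall fun t ht => ?_)
    rw [uIoc_of_le (by positivity)] at ht
    have : 0 < sin t := sin_pos_of_pos_of_lt_pi ht.1 (by linarith [ht.2, pi_pos])
    rw [logTwoSin, abs_of_pos (by positivity), log_mul two_ne_zero this.ne']
  rw [lob, neg_eq_zero]
  change ∫ t in (0 : ℝ)..π / 2, logTwoSin t = 0
  rw [h, integral_add (g := fun t => log (sin t)) intervalIntegrable_const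
    intervalIntegrable_log_sin, integral_log_sin_zero_pi_div_two,
    intervalIntegral.integral_const, smul_eq_mul]
  ring

lemma logTwoSin_strictMonoOn : StrictMonoOn logTwoSin (Ioc 0 (π / 2)) := by
  intro s hs t ht hst
  have hsin_s : 0 < sin s := sin_pos_of_pos_of_lt_pi hs.1 (by linarith [hs.2, pi_pos])
  have hsin : sin s < sin t :=
    sin_lt_sin_of_lt_of_le_pi_div_two (by linarith [hs.1, pi_pos]) ht.2 hst
  rw [logTwoSin, logTwoSin, abs_of_pos (by positivity), abs_of_pos (by linarith)]
  exact log_lt_log (by positivity) (by linarith)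

lemma strictConcaveOn_lob : StrictConcaveOn ℝ (Icc 0 (π / 2)) lob := by
  refine StrictAntiOn.strictConcaveOn_of_deriv (convex_Icc _ _) continuous_lob.continuousOn ?_
  rw [interior_Icc]
  intro s hs t ht hst
  have hderiv {u : ℝ} (hu : u ∈ Ioo 0 (π / 2)) : deriv lob u = -logTwoSin u :=
    (hasDerivAt_lob (sin_pos_of_pos_of_lt_pi hu.1 (by linarith [hu.2, pi_pos])).ne').deriv
  rw [hderiv hs, hderiv ht, neg_lt_neg_iff]
  exact logTwoSin_strictMonoOn (Ioo_subset_Ioc_self hs) (Ioo_subset_Ioc_self ht) hst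

lemma lob_pos {z : ℝ} (h0 : 0 < z) (h1 : z < π / 2) : 0 < lob z := by
  have hz : z ∈ openSegment ℝ 0 (π / 2) := by
    rw [openSegment_eq_Ioo (by positivity)]
    exact ⟨h0, h1⟩
  have h := strictConcaveOn_lob.lt_on_openSegment (left_mem_Icc.2 (by positivity))
    (right_mem_Icc.2 (by positivity)) (by positivity) hz
  rwa [lob_zero, lob_pi_div_two, min_self] at h

lemma logTwoSin_sum_eq_of_two_mul_sin_mul_cos_eq_one {θ α : ℝ} (h : 2 * sin θ * cos α = 1)
    (hp : sin (θ + α) ≠ 0) (hm : sin (θ - α) ≠ 0) :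
    2 * logTwoSin θ + logTwoSin (θ + α) + logTwoSin (θ - α)
      = 2 * logTwoSin (2 * θ - π / 2) := by
  have hθ : sin θ ≠ 0 := by rintro h0; simp [h0] at h
  have key : (2 * sin θ) ^ 2 * (2 * sin (θ + α) * (2 * sin (θ - α)))
      = (2 * sin (2 * θ - π / 2)) ^ 2 := by
    rw [sin_add, sin_sub, sin_sub_pi_div_two, cos_two_mul]
    linear_combination 4 * (2 * sin θ * cos α + 1) * h
      - (16 * sin θ ^ 2 * sin α ^ 2 - 16 * sin θ ^ 2 + 16 * cos θ ^ 2) * sin_sq_add_cos_sq θ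
      - 16 * sin θ ^ 2 * (1 - sin θ ^ 2) * sin_sq_add_cos_sq α
  simp only [logTwoSin, log_abs]
  calc 2 * log (2 * sin θ) + log (2 * sin (θ + α)) + log (2 * sin (θ - α))
      = log ((2 * sin θ) ^ 2 * (2 * sin (θ + α) * (2 * sin (θ - α)))) := by
        have hp' : 2 * sin (θ + α) ≠ 0 := by positivity
        have hm' : 2 * sin (θ - α) ≠ 0 := by positivity
        rw [log_mul (by positivity) (mul_ne_zero hp' hm'), log_mul hp' hm', log_pow]
        push_cast
        ring
    _ = 2 * log (2 * sin (2 * θ - π / 2)) := by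
        rw [key, log_pow]
        push_cast
        ring

lemma bounds_of_two_mul_sin_mul_cos_eq_one {θ α : ℝ} (hα₀ : 0 < α) (hα : α < π / 4)
    (hθ : θ ∈ Icc (-(π / 2)) (π / 2)) (h : 2 * sin θ * cos α = 1) :
    α < θ ∧ θ < π / 4 ∧ θ + α < π / 2 := by
  have hcos : 0 < cos α := cos_pos_of_mem_Ioo ⟨by linarith, by linarith⟩
  have hcos_two : 0 < cos (2 * α) := cos_pos_of_mem_Ioo ⟨by linarith, by linarith⟩
  rw [cos_two_mul] at hcos_two
  have hsin : 0 < sin θ := by nlinarith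
  have sin_lt_iff {a b : ℝ} (ha : a ∈ Icc (-(π / 2)) (π / 2))
      (hb : b ∈ Icc (-(π / 2)) (π / 2)) : sin a < sin b ↔ a < b :=
    strictMonoOn_sin.lt_iff_lt ha hb
  have mem {a : ℝ} (h₀ : 0 ≤ a) (h₁ : a ≤ π / 2) : a ∈ Icc (-(π / 2)) (π / 2) :=
    ⟨by linarith, h₁⟩
  refine ⟨(sin_lt_iff (mem hα₀.le (by linarith)) hθ).1 ?_,
    (sin_lt_iff hθ (mem (by positivity) (by linarith))).1 ?_,
    lt_sub_iff_add_lt.1 ((sin_lt_iff hθ (mem (by linarith) (by linarith))).1 ?_)⟩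
  · have h2 : sin (2 * α) < 1 := by
      have := sin_sq_add_cos_sq (2 * α)
      rw [cos_two_mul] at this
      nlinarith
    rw [sin_two_mul] at h2
    nlinarith
  · rw [sin_pi_div_four]
    refine lt_of_pow_lt_pow_left₀ 2 (by positivity) ?_
    rw [div_pow, sq_sqrt zero_le_two]
    nlinarith
  · rw [sin_pi_div_two_sub]
    nlinarith

lemma theta_mem_Icc (x : ℝ) : theta x ∈ Icc (-(π / 2)) (π / 2) := by
  rw [theta]
  exact ⟨by linarith [arccos_le_pi (1 / (2 * cos (π / x)))],
    by linarith [arccos_nonneg (1 / (2 * cos (π / x)))]⟩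

lemma one_div_two_mul_cos_pi_div_mem_Ioo {x : ℝ} (hx : 3 < x) :
    1 / (2 * cos (π / x)) ∈ Ioo 0 1 := by
  have hlt : π / x < π / 3 := div_lt_div_of_pos_left pi_pos (by norm_num) hx
  have hcos : cos (π / 3) < cos (π / x) :=
    cos_lt_cos_of_nonneg_of_le_pi (div_pos pi_pos (by linarith)).le (by linarith [pi_pos]) hlt
  rw [cos_pi_div_three] at hcos
  exact ⟨one_div_pos.2 (by linarith), (div_lt_one (by linarith)).2 (by linarith)⟩

lemma two_mul_sin_theta_mul_cos {x : ℝ} (hx : 3 < x) : 2 * sin (theta x) * cos (π / x) = 1 := by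
  obtain ⟨h₀, h₁⟩ := one_div_two_mul_cos_pi_div_mem_Ioo hx
  have hcos : cos (π / x) ≠ 0 := by rintro h; simp [h] at h₀
  rw [theta, sin_pi_div_two_sub, cos_arccos (by linarith) h₁.le]
  field_simp

lemma differentiableAt_theta {x : ℝ} (hx : 3 < x) : DifferentiableAt ℝ theta x := by
  obtain ⟨h₀, h₁⟩ := one_div_two_mul_cos_pi_div_mem_Ioo hx
  have hx₀ : x ≠ 0 := by linarith
  have hcos : 2 * cos (π / x) ≠ 0 := by rintro h; simp [h] at h₀
  have hu : DifferentiableAt ℝ (fun y => 1 / (2 * cos (π / y))) x := by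
    fun_prop (disch := assumption)
  have harccos : DifferentiableAt ℝ arccos (1 / (2 * cos (π / x))) :=
    differentiableAt_arccos.2 ⟨by linarith, h₁.ne⟩
  exact (harccos.comp x hu).const_sub (π / 2)

lemma theta_bounds {x : ℝ} (hx : 4 < x) :
    π / x < theta x ∧ theta x < π / 4 ∧ theta x + π / x < π / 2 :=
  bounds_of_two_mul_sin_mul_cos_eq_one (div_pos pi_pos (by linarith))
    (div_lt_div_of_pos_left pi_pos (by norm_num) hx) (theta_mem_Icc x)
    (two_mul_sin_theta_mul_cos (by linarith))

lemma sin_ne_zero_of_mem_Ioo {z : ℝ} (h₀ : z ≠ 0) (h : z ∈ Ioo (-π) π) : sin z ≠ 0 :=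
  fun hz => h₀ ((sin_eq_zero_iff_of_lt_of_lt h.1 h.2).1 hz)

lemma lobG_pos {x : ℝ} (hx : 4 < x) : 0 < lobG x := by
  obtain ⟨h₁, h₂, h₃⟩ := theta_bounds hx
  have hα : 0 < π / x := div_pos pi_pos (by linarith)
  have hneg : lob (2 * theta x - π / 2) = -lob (π / 2 - 2 * theta x) := by
    rw [← lob_neg, neg_sub]
  rw [lobG, hneg]
  have := lob_pos (z := theta x) (by linarith) (by linarith)
  have := lob_pos (z := theta x + π / x) (by linarith) h₃
  have := lob_pos (z := theta x - π / x) (by linarith) (by linarith)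
  have := lob_pos (z := π / 2 - 2 * theta x) (by linarith) (by linarith)
  linarith

lemma hasDerivAt_lobG {x : ℝ} (hx : 4 < x) :
    HasDerivAt lobG
      (π / x ^ 2 * (logTwoSin (theta x + π / x) - logTwoSin (theta x - π / x))) x := by
  obtain ⟨h₁, h₂, h₃⟩ := theta_bounds hx
  have hα : 0 < π / x := div_pos pi_pos (by linarith)
  have hpi := pi_pos
  obtain ⟨θ', hθ⟩ : ∃ θ', HasDerivAt theta θ' x :=
    ⟨_, (differentiableAt_theta (x := x) (by linarith)).hasDerivAt⟩
  have hdiv : HasDerivAt (fun y => π / y) (-(π / x ^ 2)) x := by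
    simpa [div_eq_mul_inv] using (hasDerivAt_inv (by linarith : x ≠ 0)).const_mul π
  have hsum := logTwoSin_sum_eq_of_two_mul_sin_mul_cos_eq_one
    (two_mul_sin_theta_mul_cos (x := x) (by linarith))
    (sin_ne_zero_of_mem_Ioo (by linarith) ⟨by linarith, by linarith⟩)
    (sin_ne_zero_of_mem_Ioo (by linarith) ⟨by linarith, by linarith⟩)
  -- `θ'` multiplies exactly the vanishing combination `hsum`, so it is never computed.
  refine ((((hθ.lob ?_).const_mul 2).fun_add ((hθ.fun_add hdiv).lob ?_)).fun_add
    ((hθ.fun_sub hdiv).lob ?_)).fun_sub (((hθ.const_mul 2).sub_const (π / 2)).lob ?_)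
    |>.congr_deriv (by linear_combination -θ' * hsum)
  all_goals exact sin_ne_zero_of_mem_Ioo (by linarith) ⟨by linarith, by linarith⟩

lemma hasDerivAt_lobV {x : ℝ} (hx : 4 < x) :
    HasDerivAt lobV (lobG x / 2
      + π / (2 * x) * (logTwoSin (theta x + π / x) - logTwoSin (theta x - π / x))) x :=
  (((hasDerivAt_id' x).div_const 2).mul (hasDerivAt_lobG hx)).congr_deriv (by field_simp)

/-- The Löbell volume function `v` is strictly increasing on `[5, ∞)`. -/
theorem lobV_strictMonoOn : StrictMonoOn lobV (Set.Ici (5 : ℝ)) := by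
  refine strictMonoOn_of_deriv_pos (convex_Ici 5)
    (fun x hx => (hasDerivAt_lobV (by linarith [mem_Ici.1 hx])).continuousAt.continuousWithinAt)
    fun x hx => ?_
  rw [interior_Ici, mem_Ioi] at hx
  have hx₄ : (4 : ℝ) < x := by linarith
  have hα : 0 < π / x := by positivity
  obtain ⟨h₁, -, h₃⟩ := theta_bounds hx₄
  have hlog : logTwoSin (theta x - π / x) < logTwoSin (theta x + π / x) :=
    logTwoSin_strictMonoOn ⟨by linarith, by linarith⟩ ⟨by linarith, h₃.le⟩ (by linarith)
  have hg := lobG_pos hx₄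
  have hlog' := sub_pos.2 hlog
  rw [(hasDerivAt_lobV hx₄).deriv]
  positivity
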